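/- arXiv:2512.10838 — 2 statements merged into one kernel-verified Lean document; each statement's English description precedes it below -/
import Mathlib

section
/- Let C be a linear code in 𝔽_q^n and C^⊥ = {u ∈ 𝔽_q^n : u·v = 0 for all v ∈ C} its dual. Then the weight enumerators satisfy the MacWilliams identity W_C(x,y) = (1/#C^⊥) · W_{C^⊥}(x + (q−1)y, x − y). -/
noncomputable section

open scoped Classical

/-- The Hamming weight: the number of nonzero coordinates. -/
def hamWt {R : Type*} [CommRing R] {n : ℕ} (c : Fin n → R) : ℕ :=
  (Finset.univ.filter fun j : Fin n => c j ≠ 0).card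

/-- The dual code `C^⊥ = {u : u·v = 0 for all v ∈ C}`. -/
def dualCode {R : Type*} [CommRing R] {n : ℕ} (C : Submodule R (Fin n → R)) :
    Submodule R (Fin n → R) where
  carrier := {u | ∀ v ∈ C, ∑ j, u j * v j = 0}
  zero_mem' := fun v _ => by simp
  add_mem' := fun {a b} ha hb v hv => by
    simp only [Pi.add_apply, add_mul, Finset.sum_add_distrib]
    rw [ha v hv, hb v hv, add_zero]
  smul_mem' := fun c a ha v hv => by
    simp only [Pi.smul_apply, smul_eq_mul, mul_assoc, ← Finset.mul_sum]
    rw [ha v hv, mul_zero]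

/-! Fix a primitive additive character `χ` of `𝔽_q`. The Fourier transform
`u ↦ ∑ v, χ (v ⬝ᵥ u) x ^ (n - wt v) y ^ wt v` of the weight function factorises over the
coordinates, and the factor at a coordinate is `x + (q - 1) y` or `x - y` according as that
coordinate of `u` vanishes or not. Summing the transform over `C^⊥` and exchanging the sums
(Poisson summation) leaves the character sums `∑ u ∈ C^⊥, χ (v ⬝ᵥ u)`: as `u ↦ χ (v ⬝ᵥ u)`
is a character of the group `C^⊥`, such a sum is `#C^⊥` for `v ∈ C^⊥⊥ = C` and vanishes
otherwise. -/

open Finset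

lemma AddChar.map_sum_eq_prod {A M ι : Type*} [AddCommMonoid A] [CommMonoid M]
    (χ : AddChar A M) (s : Finset ι) (f : ι → A) :
    χ (∑ i ∈ s, f i) = ∏ i ∈ s, χ (f i) := by
  induction s using Finset.cons_induction with
  | empty => simp
  | cons a s ha ih => rw [sum_cons, prod_cons, map_add_eq_mul, ih]

section DualCode

variable {R : Type*} [CommRing R] {n : ℕ}

lemma mem_dualCode {C : Submodule R (Fin n → R)} {u : Fin n → R} :
    u ∈ dualCode C ↔ ∀ v ∈ C, u ⬝ᵥ v = 0 := Iff.rfl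

lemma dualCode_eq_orthogonal (C : Submodule R (Fin n → R)) :
    dualCode C = LinearMap.BilinForm.orthogonal (dotProductBilin R R) C := by
  ext u
  simp [mem_dualCode, LinearMap.BilinForm.mem_orthogonal_iff, dotProduct_comm]

lemma nondegenerate_dotProductBilin :
    LinearMap.BilinForm.Nondegenerate
      (dotProductBilin R R : LinearMap.BilinForm R (Fin n → R)) := by
  constructor <;> exact fun u hu => funext fun j => by simpa using hu (Pi.single j 1)

end DualCode

lemma dualCode_dualCode {F : Type*} [Field F] {n : ℕ} (C : Submodule F (Fin n → F)) :
    dualCode (dualCode C) = C := by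
  rw [dualCode_eq_orthogonal, dualCode_eq_orthogonal]
  exact LinearMap.BilinForm.orthogonal_orthogonal nondegenerate_dotProductBilin
    (fun x y h => by simpa [dotProduct_comm] using h) C

lemma prod_ite_eq_zero_eq_pow_hamWt {R M : Type*} [CommRing R] [CommMonoid M] {n : ℕ}
    (x y : M) (v : Fin n → R) :
    ∏ j, (if v j = 0 then x else y) = x ^ (n - hamWt v) * y ^ hamWt v := by
  have hcard := card_filter_add_card_filter_not (s := (univ : Finset (Fin n))) (v · = 0)
  rw [card_univ, Fintype.card_fin] at hcard
  have hwt : #{j | ¬v j = 0} = hamWt v := rfl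
  rw [prod_ite, prod_const, prod_const, hwt]
  congr 2
  omega

section Character

variable {F R : Type*} [Field F] [Fintype F] [CommRing R] [IsDomain R] {χ : AddChar F R}

lemma sum_ite_eq_zero_mul_addChar (hχ : χ.IsPrimitive) (x y : R) (a : F) :
    ∑ b : F, (if b = 0 then x else y) * χ (b * a) =
      if a = 0 then x + (Fintype.card F - 1) * y else x - y := by
  have hsplit (b : F) : (if b = 0 then x else y) * χ (b * a) =
      (if b = 0 then x - y else 0) + y * χ (b * a) := by
    split_ifs with hb <;> simp [hb]
  simp only [hsplit, sum_add_distrib, sum_ite_eq', mem_univ, if_true, ← mul_sum,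
    AddChar.sum_mulShift a hχ]
  split_ifs <;> ring

variable {n : ℕ}

lemma sum_pow_hamWt_mul_addChar_dotProduct (hχ : χ.IsPrimitive) (x y : R) (u : Fin n → F) :
    ∑ v : Fin n → F, x ^ (n - hamWt v) * y ^ hamWt v * χ (v ⬝ᵥ u) =
      (x + (Fintype.card F - 1) * y) ^ (n - hamWt u) * (x - y) ^ hamWt u := by
  simp_rw [dotProduct, AddChar.map_sum_eq_prod, ← prod_ite_eq_zero_eq_pow_hamWt,
    ← prod_mul_distrib]
  rw [← Fintype.prod_sum (fun j (b : F) => (if b = 0 then x else y) * χ (b * u j))]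
  simp_rw [sum_ite_eq_zero_mul_addChar hχ]

lemma sum_addChar_dotProduct_submodule (hχ : χ.IsPrimitive) (D : Submodule F (Fin n → F))
    (v : Fin n → F) :
    ∑ u : D, χ ((u : Fin n → F) ⬝ᵥ v) =
      if v ∈ dualCode D then (Nat.card D : R) else 0 := by
  let ψ : AddChar D R :=
    χ.compAddMonoidHom ((dotProductBilin F F).flip v ∘ₗ D.subtype).toAddMonoidHom
  have hψ : ψ = 0 ↔ v ∈ dualCode D := by
    rw [AddChar.eq_zero_iff, mem_dualCode]
    refine ⟨fun h w hw => by_contra fun hvw => hχ hvw (AddChar.ext _ _ fun c => ?_),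
      fun h u => ?_⟩
    · simpa [ψ, dotProduct_comm v, mul_comm c] using h ⟨c • w, D.smul_mem c hw⟩
    · simp [ψ, dotProduct_comm _ v, h u u.2]
  rw [Nat.card_eq_fintype_card]
  exact ψ.sum_eq_ite.trans (if_congr hψ rfl rfl)

lemma sum_dualCode_sum_mul_addChar_dotProduct (hχ : χ.IsPrimitive) (f : (Fin n → F) → R)
    (C : Submodule F (Fin n → F)) :
    ∑ u : dualCode C, ∑ v, f v * χ (v ⬝ᵥ u) = Nat.card (dualCode C) * ∑ v : C, f v := by
  calc ∑ u : dualCode C, ∑ v, f v * χ (v ⬝ᵥ u)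
      = ∑ v, f v * ∑ u : dualCode C, χ ((u : Fin n → F) ⬝ᵥ v) := by
        rw [sum_comm]
        simp_rw [mul_sum, dotProduct_comm]
    _ = ∑ v, if v ∈ C then Nat.card (dualCode C) * f v else 0 := by
        simp_rw [sum_addChar_dotProduct_submodule hχ, dualCode_dualCode, mul_ite, mul_zero,
          mul_comm]
    _ = Nat.card (dualCode C) * ∑ v : C, f v := by
        rw [← sum_filter, sum_subtype (p := (· ∈ C)) _ (by simp), mul_sum]

lemma sum_dualCode_pow_hamWt (hχ : χ.IsPrimitive) (x y : R) (C : Submodule F (Fin n → F)) :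
    ∑ u : dualCode C, (x + (Fintype.card F - 1) * y) ^ (n - hamWt (u : Fin n → F)) *
        (x - y) ^ hamWt (u : Fin n → F) =
      Nat.card (dualCode C) *
        ∑ v : C, x ^ (n - hamWt (v : Fin n → F)) * y ^ hamWt (v : Fin n → F) := by
  simp_rw [← sum_pow_hamWt_mul_addChar_dotProduct hχ]
  exact sum_dualCode_sum_mul_addChar_dotProduct hχ _ C

end Character

/-- The MacWilliams identity for a linear code `C ⊆ 𝔽_q^n`:
`W_C(x,y) = (1/#C^⊥) · W_{C^⊥}(x + (q−1)y, x − y)`. -/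
theorem stmt13 (F : Type*) [Field F] [Fintype F] (n : ℕ)
    (C : Submodule F (Fin n → F)) (x y : ℚ) :
    (∑ᶠ u : C, x ^ (n - hamWt (u : Fin n → F)) * y ^ hamWt (u : Fin n → F)) =
      (1 / (Nat.card (dualCode C) : ℚ)) *
        ∑ᶠ u : dualCode C,
          (x + ((Fintype.card F : ℚ) - 1) * y) ^ (n - hamWt (u : Fin n → F)) *
            (x - y) ^ hamWt (u : Fin n → F) := by
  have hcard : (Nat.card (dualCode C) : ℂ) ≠ 0 := Nat.cast_ne_zero.2 Nat.card_pos.ne'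
  rw [finsum_eq_sum_of_fintype, finsum_eq_sum_of_fintype]
  apply Rat.cast_injective (α := ℂ)
  push_cast
  rw [sum_dualCode_pow_hamWt (AddChar.FiniteField.primitiveChar_to_Complex_isPrimitive F)]
  field_simp
end
end

section
/- Let R be a finite commutative Frobenius ring (e.g. R = ℤ/qℤ) and C ⊆ R^n an R-submodule with annihilator C^⊥ = {u ∈ R^n : u·v = 0 for all v ∈ C}. Then the Hamming weight enumerators satisfy W_C(x,y) = (1/#C^⊥) · W_{C^⊥}(x + (#R − 1)y, x − y). -/
noncomputable section

open scoped Classical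

open Complex Real


def ratExpHom : ℚ →+ Additive ℂˣ where
  toFun q := Additive.ofMul (Units.mk0 (Complex.exp (2 * π * I * q)) (Complex.exp_ne_zero _))
  map_zero' := by
    apply Additive.toMul.injective
    ext
    simp
  map_add' a b := by
    apply Additive.toMul.injective
    ext
    push_cast
    simp [mul_add, Complex.exp_add]

def circChar : AddCircle (1 : ℚ) →+ Additive ℂˣ :=
  QuotientAddGroup.lift _ ratExpHom (by
    intro q hq
    obtain ⟨m, hm⟩ := hq
    apply Additive.toMul.injective
    ext
    show Complex.exp (2 * π * I * q) = 1
    have : (q : ℂ) = (m : ℤ) := by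
      rw [← hm]; push_cast [zsmul_eq_mul]; ring
    rw [this]
    rw [show 2 * (π:ℂ) * I * (m : ℤ) = (m : ℤ) * (2 * π * I) by ring]
    exact Complex.exp_int_mul_two_pi_mul_I m)

def toC (a : AddCircle (1 : ℚ)) : ℂ := ((circChar a).toMul : ℂˣ)

lemma toC_zero : toC 0 = 1 := by simp [toC]

lemma toC_add (a b : AddCircle (1 : ℚ)) : toC (a + b) = toC a * toC b := by
  simp only [toC, map_add]
  rfl

lemma toC_coe (q : ℚ) : toC (q : AddCircle (1:ℚ)) = Complex.exp (2 * π * I * q) := by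
  rfl

lemma toC_eq_one {a : AddCircle (1 : ℚ)} (h : toC a = 1) : a = 0 := by
  induction a using QuotientAddGroup.induction_on with
  | H q =>
    rw [toC_coe, Complex.exp_eq_one_iff] at h
    obtain ⟨m, hm⟩ := h
    have h2 : (2 * (π:ℂ) * I) ≠ 0 := by
      simp [Real.pi_ne_zero, I_ne_zero]
    have hq : (q : ℂ) = (m : ℂ) := by
      apply mul_left_cancel₀ h2
      rw [hm]; ring
    have : q = (m : ℚ) := by exact_mod_cast hq
    rw [this, AddCircle.coe_eq_zero_iff]
    exact ⟨m, by simp⟩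

section chunk2
variable {R : Type*} [CommRing R] [Fintype R]
  (e : R ≃+ (R →+ AddCircle (1 : ℚ)))
  (he : ∀ r s : R, ∀ z : R, e (r * s) z = e s (r * z))

set_option linter.unusedSectionVars false

include he in
lemma e_apply (r z : R) : e r z = e 1 (r * z) := by
  have := he r 1 z
  rwa [mul_one] at this

include he in
lemma eq_zero_of_psi (a : R) (h : ∀ z, e 1 (a * z) = 0) : a = 0 := by
  have : e a = 0 := by
    ext z; rw [e_apply e he a z]; exact h z
  have := e.injective (this.trans (map_zero e).symm)
  simpa using this

def chi (r : R) : ℂ := toC (e 1 r)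

lemma chi_zero : chi e 0 = 1 := by simp [chi, toC_zero]

lemma chi_add (a b : R) : chi e (a+b) = chi e a * chi e b := by
  simp [chi, map_add, toC_add]

lemma chi_sum {ι : Type*} (s : Finset ι) (f : ι → R) :
    chi e (∑ i ∈ s, f i) = ∏ i ∈ s, chi e (f i) := by
  classical
  induction s using Finset.induction_on with
  | empty => simp [chi_zero]
  | insert _ _ h ih => rw [Finset.sum_insert h, Finset.prod_insert h, chi_add, ih]

include he in
lemma sum_chi (a : R) (ha : a ≠ 0) : ∑ b : R, chi e (a * b) = 0 := by
  have : ¬ ∀ z, e 1 (a * z) = 0 := fun h => ha (eq_zero_of_psi e he a h)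
  push_neg at this
  obtain ⟨z, hz⟩ := this
  have hchi : chi e (a * z) ≠ 1 := fun h => hz (toC_eq_one h)
  have key : ∑ b : R, chi e (a * b) = chi e (a * z) * ∑ b : R, chi e (a * b) := by
    rw [Finset.mul_sum,
      ← Equiv.sum_comp (Equiv.addLeft z) (fun b => chi e (a * b))]
    refine Finset.sum_congr rfl fun b _ => ?_
    simp only [Equiv.coe_addLeft]
    rw [mul_add, chi_add]
  have h2 : (1 - chi e (a * z)) * (∑ b : R, chi e (a * b)) = 0 := by
    rw [sub_mul, one_mul, sub_eq_zero]
    exact key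
  rcases mul_eq_zero.mp h2 with h | h
  · exact absurd (by linear_combination -h : chi e (a*z) = 1) hchi
  · exact h

end chunk2

section chunk3
variable {R : Type*} [CommRing R] [Fintype R]
  (e : R ≃+ (R →+ AddCircle (1 : ℚ)))
  (he : ∀ r s : R, ∀ z : R, e (r * s) z = e s (r * z))

set_option linter.unusedSectionVars false

include he in
lemma exists_dual_char {n : ℕ} (C : Submodule R (Fin n → R)) (v : Fin n → R) (hv : v ∉ C) :
    ∃ u : Fin n → R, u ∈ dualCode C ∧ e 1 (∑ j, u j * v j) ≠ 0 := by
  classical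
  have hm : (Submodule.Quotient.mk v : (Fin n → R) ⧸ C) ≠ 0 := by
    simpa [Submodule.Quotient.mk_eq_zero] using hv
  obtain ⟨c, hc⟩ := CharacterModule.exists_character_apply_ne_zero_of_ne_zero hm
  set φ : (Fin n → R) →+ AddCircle (1:ℚ) :=
    AddMonoidHom.comp (show (Fin n → R) ⧸ C →+ AddCircle (1:ℚ) from c) (Submodule.mkQ C).toAddMonoidHom with hφ
  have hφC : ∀ w ∈ C, φ w = 0 := by
    intro w hw
    simp only [hφ, AddMonoidHom.comp_apply, LinearMap.toAddMonoidHom_coe, Submodule.mkQ_apply]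
    change c (Submodule.Quotient.mk w) = 0
    rw [(Submodule.Quotient.mk_eq_zero C).mpr hw, map_zero]
  set u : Fin n → R := fun j => e.symm (φ.comp (AddMonoidHom.single (fun _ : Fin n => R) j))
    with hu
  have key : ∀ w : Fin n → R, φ w = e 1 (∑ j, u j * w j) := by
    intro w
    have hw : w = ∑ j, Pi.single j (w j) := by
      rw [Finset.univ_sum_single]
    conv_lhs => rw [hw]
    rw [map_sum, map_sum]
    refine Finset.sum_congr rfl fun j _ => ?_
    rw [← e_apply e he]
    have : e (u j) = φ.comp (AddMonoidHom.single (fun _ : Fin n => R) j) := by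
      rw [hu]; exact e.apply_symm_apply _
    rw [this]
    rfl
  refine ⟨u, ?_, ?_⟩
  · intro w hw
    apply eq_zero_of_psi e he
    intro z
    have hzw : z • w ∈ C := C.smul_mem z hw
    have := hφC _ hzw
    rw [key] at this
    rw [← this]
    congr 1
    rw [Finset.sum_mul]
    refine Finset.sum_congr rfl fun j _ => ?_
    simp only [Pi.smul_apply, smul_eq_mul]
    ring
  · rw [← key]
    exact hc

include he in
lemma dual_sum {n : ℕ} (C : Submodule R (Fin n → R)) (v : Fin n → R) :
    ∑ u : dualCode C, chi e (∑ j, (u : Fin n → R) j * v j)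
      = if v ∈ C then (Fintype.card (dualCode C) : ℂ) else 0 := by
  classical
  split_ifs with hv
  · rw [Finset.sum_congr rfl (fun u _ => ?_), Finset.sum_const, Finset.card_univ, nsmul_eq_mul, mul_one]
    show chi e _ = 1
    rw [u.2 v hv, chi_zero]
  · obtain ⟨u₀, hu₀, hne⟩ := exists_dual_char e he C v hv
    have hchi : chi e (∑ j, u₀ j * v j) ≠ 1 := fun h => hne (toC_eq_one h)
    set S := ∑ u : dualCode C, chi e (∑ j, (u : Fin n → R) j * v j) with hS
    have key : S = chi e (∑ j, u₀ j * v j) * S := by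
      rw [hS, Finset.mul_sum,
        ← Equiv.sum_comp (Equiv.addLeft (⟨u₀, hu₀⟩ : dualCode C))
          (fun u : dualCode C => chi e (∑ j, (u : Fin n → R) j * v j))]
      refine Finset.sum_congr rfl fun u _ => ?_
      simp only [Equiv.coe_addLeft]
      have : (∑ j, ((⟨u₀, hu₀⟩ + u : dualCode C) : Fin n → R) j * v j)
          = (∑ j, u₀ j * v j) + ∑ j, (u : Fin n → R) j * v j := by
        rw [← Finset.sum_add_distrib]
        refine Finset.sum_congr rfl fun j _ => ?_
        show (u₀ j + (u : Fin n → R) j) * v j = _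
        ring
      rw [this, chi_add]
    have h2 : (1 - chi e (∑ j, u₀ j * v j)) * S = 0 := by
      rw [sub_mul, one_mul, sub_eq_zero]; exact key
    rcases mul_eq_zero.mp h2 with h | h
    · exact absurd (by linear_combination -h : chi e (∑ j, u₀ j * v j) = 1) hchi
    · exact h

end chunk3

section chunk4
variable {R : Type*} [CommRing R] [Fintype R]
  (e : R ≃+ (R →+ AddCircle (1 : ℚ)))
  (he : ∀ r s : R, ∀ z : R, e (r * s) z = e s (r * z))
  (X Y : ℂ)

set_option linter.unusedSectionVars false

lemma prod_ite_wt {n : ℕ} (A B : ℂ) (v : Fin n → R) :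
    (∏ j, if v j = 0 then A else B) = A ^ (n - hamWt v) * B ^ hamWt v := by
  classical
  rw [Finset.prod_ite, Finset.prod_const, Finset.prod_const, hamWt]
  congr 2
  have h1 : (Finset.univ.filter fun j => v j = 0)
      = Finset.univ.filter fun j => ¬ v j ≠ 0 := by simp
  have h2 := Finset.card_filter_add_card_filter_not
    (s := (Finset.univ : Finset (Fin n))) (p := fun j => v j ≠ 0)
  simp only [Finset.card_univ, Fintype.card_fin] at h2
  rw [h1]
  omega

/-- `h b = if b = 0 then X else Y` -/
def hfun (X Y : ℂ) (b : R) : ℂ := if b = 0 then X else Y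

lemma sum_hfun : ∑ b : R, hfun X Y b = X + ((Fintype.card R : ℂ) - 1) * Y := by
  classical
  rw [show (∑ b : R, hfun X Y b) = ∑ b : R, (Y + if b = 0 then X - Y else 0) by
      refine Finset.sum_congr rfl fun b _ => ?_
      by_cases hb : b = 0 <;> simp [hfun, hb]]
  rw [Finset.sum_add_distrib, Finset.sum_const, Finset.sum_ite_eq' Finset.univ (0 : R)]
  simp [Finset.card_univ, nsmul_eq_mul]
  ring

include he in
lemma g_eval (a : R) :
    ∑ b : R, chi e (a * b) * hfun X Y b
      = if a = 0 then X + ((Fintype.card R : ℂ) - 1) * Y else X - Y := by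
  classical
  split_ifs with ha
  · subst ha
    rw [show (∑ b : R, chi e (0 * b) * hfun X Y b) = ∑ b : R, hfun X Y b by
      refine Finset.sum_congr rfl fun b _ => ?_
      rw [zero_mul, chi_zero, one_mul]]
    exact sum_hfun X Y
  · have hsplit : ∀ b : R, chi e (a * b) * hfun X Y b
        = chi e (a * b) * Y + (if b = 0 then chi e (a * b) * (X - Y) else 0) := by
      intro b
      by_cases hb : b = 0
      · simp [hfun, hb]; ring
      · simp [hfun, hb]
    rw [Finset.sum_congr rfl fun b _ => hsplit b, Finset.sum_add_distrib,
      ← Finset.sum_mul, sum_chi e he a ha, zero_mul, zero_add,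
      Finset.sum_ite_eq' Finset.univ (0 : R)]
    simp [chi_zero]

end chunk4

section chunk5
variable {R : Type*} [CommRing R] [Fintype R]
  (e : R ≃+ (R →+ AddCircle (1 : ℚ)))
  (he : ∀ r s : R, ∀ z : R, e (r * s) z = e s (r * z))
  (X Y : ℂ)

set_option linter.unusedSectionVars false

include he in
lemma main_complex {n : ℕ} (C : Submodule R (Fin n → R)) :
    (∑ u : dualCode C,
        (X + ((Fintype.card R : ℂ) - 1) * Y) ^ (n - hamWt (u : Fin n → R)) *
          (X - Y) ^ hamWt (u : Fin n → R))
      = (Fintype.card (dualCode C) : ℂ) *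
          ∑ v : C, X ^ (n - hamWt (v : Fin n → R)) * Y ^ hamWt (v : Fin n → R) := by
  classical
  have step1 : ∀ u : dualCode C,
      (X + ((Fintype.card R : ℂ) - 1) * Y) ^ (n - hamWt (u : Fin n → R)) *
        (X - Y) ^ hamWt (u : Fin n → R)
      = ∑ v : Fin n → R,
          chi e (∑ j, (u : Fin n → R) j * v j) * ∏ j, hfun X Y (v j) := by
    intro u
    rw [← prod_ite_wt (X + ((Fintype.card R : ℂ) - 1) * Y) (X - Y) (u : Fin n → R)]
    have e1 : (∏ j, if (u : Fin n → R) j = 0 then X + ((Fintype.card R : ℂ) - 1) * Y else X - Y)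
        = ∏ j, ∑ b : R, chi e ((u : Fin n → R) j * b) * hfun X Y b := by
      refine Finset.prod_congr rfl fun j _ => ?_
      rw [g_eval e he X Y]
    rw [e1, Finset.prod_univ_sum]
    rw [Fintype.piFinset_univ]
    refine Finset.sum_congr rfl fun v _ => ?_
    rw [Finset.prod_mul_distrib, chi_sum]
  rw [Finset.sum_congr rfl fun u _ => step1 u, Finset.sum_comm]
  have step2 : ∀ v : Fin n → R,
      (∑ u : dualCode C, chi e (∑ j, (u : Fin n → R) j * v j) * ∏ j, hfun X Y (v j))
      = (if v ∈ C then (Fintype.card (dualCode C) : ℂ) else 0) * ∏ j, hfun X Y (v j) := by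
    intro v
    rw [← Finset.sum_mul, dual_sum e he C v]
  rw [Finset.sum_congr rfl fun v _ => step2 v]
  have step3 : (∑ v : Fin n → R,
      (if v ∈ C then (Fintype.card (dualCode C) : ℂ) else 0) * ∏ j, hfun X Y (v j))
      = ∑ v ∈ Finset.univ.filter (· ∈ C),
          (Fintype.card (dualCode C) : ℂ) * ∏ j, hfun X Y (v j) := by
    rw [Finset.sum_filter]
    refine Finset.sum_congr rfl fun v _ => ?_
    split_ifs with hv <;> simp
  rw [step3, ← Finset.mul_sum]
  congr 1
  rw [← Finset.sum_subtype (Finset.univ.filter (· ∈ C)) (fun v => by simp)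
    (fun v => X ^ (n - hamWt v) * Y ^ hamWt v)]
  refine Finset.sum_congr rfl fun v _ => ?_
  rw [← prod_ite_wt X Y v]
  rfl

end chunk5


/-- The MacWilliams identity over a finite commutative Frobenius ring `R`: for an `R`-linear
code `C ⊆ R^n` with annihilator `C^⊥`,
`W_C(x,y) = (1/#C^⊥) · W_{C^⊥}(x + (#R − 1)y, x − y)`.
Frobenius is encoded by the characterization that the character module
`Hom(R, ℚ/ℤ)` is isomorphic to `R` as an `R`-module, where `r • φ = φ(r·_)`. -/
theorem stmt18 (R : Type*) [CommRing R] [Fintype R]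
    (hfrob : ∃ e : R ≃+ (R →+ AddCircle (1 : ℚ)),
      ∀ r s : R, ∀ z : R, e (r * s) z = e s (r * z))
    (n : ℕ) (C : Submodule R (Fin n → R)) (x y : ℚ) :
    (∑ᶠ u : C, x ^ (n - hamWt (u : Fin n → R)) * y ^ hamWt (u : Fin n → R)) =
      (1 / (Nat.card (dualCode C) : ℚ)) *
        ∑ᶠ u : dualCode C,
          (x + ((Fintype.card R : ℚ) - 1) * y) ^ (n - hamWt (u : Fin n → R)) *
            (x - y) ^ hamWt (u : Fin n → R) := by
  classical
  obtain ⟨e, he⟩ := hfrob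
  rw [finsum_eq_sum_of_fintype, finsum_eq_sum_of_fintype]
  have key := main_complex e he (x : ℂ) (y : ℂ) C
  have hpos : 0 < Fintype.card (dualCode C) := Fintype.card_pos
  apply Rat.cast_injective (α := ℂ)
  push_cast
  rw [Nat.card_eq_fintype_card, key]
  have hne : (Fintype.card (dualCode C) : ℂ) ≠ 0 := by
    exact_mod_cast hpos.ne'
  field_simp
end
end
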